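/- Under the margin condition: (i) for every 0<h≤δ, E[|τ(X)|·1{0<|τ(X)|<h}] ≤ c̄·h^{1+α}; and (ii) for every 0<h≤δ and every measurable D:𝒳→[0,1] such that D(x) = 1{τ(x)>0} whenever |τ(x)| ≥ h, the value gap satisfies 0 ≤ V₀ − V(D) ≤ c̄·h^{1+α}. -/

import Mathlib

/-!
Pointwise, the regret `max a b - (d a + (1 - d) b)` of a randomized choice `d ∈ [0, 1]` between
two arms lies in `[0, |a - b|]`, and vanishes when `d` picks the better arm. Since `D` agrees with
the optimal rule wherever `|τ| ≥ h`, the regret at `X` is at most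
`|τ(X)|·1{0 < |τ(X)| < h} ≤ h·1{0 < |τ(X)| < h}`; integrating and applying the margin condition at
`t = h` gives `h · c̄ h^α = c̄ h^{1+α}`.
-/

open MeasureTheory

section Regret

variable {a b d : ℝ}

theorem max_sub_mul_add_one_sub_mul_nonneg (hd : d ∈ Set.Icc (0 : ℝ) 1) :
    0 ≤ max a b - (d * a + (1 - d) * b) := by
  obtain ⟨hd0, hd1⟩ := hd
  rcases le_total b a with hba | hab
  · rw [max_eq_left hba]; nlinarith
  · rw [max_eq_right hab]; nlinarith

theorem max_sub_mul_add_one_sub_mul_le_abs_sub (hd : d ∈ Set.Icc (0 : ℝ) 1) :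
    max a b - (d * a + (1 - d) * b) ≤ |a - b| := by
  obtain ⟨hd0, hd1⟩ := hd
  rcases le_total b a with hba | hab
  · rw [max_eq_left hba, abs_of_nonneg (sub_nonneg.2 hba)]; nlinarith
  · rw [max_eq_right hab, abs_of_nonpos (sub_nonpos.2 hab)]; nlinarith

theorem max_sub_ite_mul_add_one_sub_ite_mul_eq_zero (a b : ℝ) :
    max a b - ((if 0 < a - b then 1 else 0) * a + (1 - if 0 < a - b then 1 else 0) * b) = 0 := by
  split_ifs with hab
  · rw [max_eq_left (sub_pos.1 hab).le]; ring
  · rw [max_eq_right (sub_nonpos.1 (not_lt.1 hab))]; ring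

theorem max_sub_mul_add_one_sub_mul_le_margin {h : ℝ} (hd : d ∈ Set.Icc (0 : ℝ) 1)
    (hopt : h ≤ |a - b| → d = if 0 < a - b then 1 else 0) :
    max a b - (d * a + (1 - d) * b) ≤ |a - b| * if 0 < |a - b| ∧ |a - b| < h then 1 else 0 := by
  by_cases hbig : h ≤ |a - b|
  · rw [hopt hbig, max_sub_ite_mul_add_one_sub_ite_mul_eq_zero]
    positivity
  rcases (abs_nonneg (a - b)).eq_or_lt with hzero | hpos
  · rw [← hzero, zero_mul, hzero]
    exact max_sub_mul_add_one_sub_mul_le_abs_sub hd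
  · rw [if_pos ⟨hpos, not_le.1 hbig⟩, mul_one]
    exact max_sub_mul_add_one_sub_mul_le_abs_sub hd

end Regret

theorem abs_mul_ite_le_indicator {Ω : Type*} (f : Ω → ℝ) (h : ℝ) (ω : Ω) :
    |f ω| * (if 0 < |f ω| ∧ |f ω| < h then 1 else 0)
      ≤ {ω | 0 < |f ω| ∧ |f ω| < h}.indicator (fun _ => h) ω := by
  by_cases hω : 0 < |f ω| ∧ |f ω| < h
  · rw [if_pos hω, mul_one, Set.indicator_of_mem (s := {ω | 0 < |f ω| ∧ |f ω| < h}) hω]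
    exact hω.2.le
  · rw [if_neg hω, mul_zero, Set.indicator_of_notMem (s := {ω | 0 < |f ω| ∧ |f ω| < h}) hω]

section Margin

variable {Ω : Type*} [MeasurableSpace Ω] {μ : Measure Ω}

theorem MeasureTheory.Integrable.mul_add_one_sub_mul {d u v : Ω → ℝ} (hu : Integrable u μ)
    (hv : Integrable v μ)
    (hd : AEStronglyMeasurable d μ) (hd01 : ∀ ω, d ω ∈ Set.Icc (0 : ℝ) 1) :
    Integrable (fun ω => d ω * u ω + (1 - d ω) * v ω) μ := by
  refine (hu.bdd_mul hd (c := 1) (ae_of_all _ fun ω => ?_)).add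
    (hv.bdd_mul (aestronglyMeasurable_const.sub hd) (c := 1) (ae_of_all _ fun ω => ?_))
  all_goals
    obtain ⟨h0, h1⟩ := hd01 ω
    rw [Real.norm_eq_abs, abs_le]
    constructor <;> linarith

theorem integral_le_mul_measureReal_of_le_abs_mul_ite [IsFiniteMeasure μ] {f g : Ω → ℝ}
    (hf : AEMeasurable f μ) {h : ℝ} (hg0 : ∀ ω, 0 ≤ g ω)
    (hg : ∀ ω, g ω ≤ |f ω| * if 0 < |f ω| ∧ |f ω| < h then 1 else 0) :
    ∫ ω, g ω ∂μ ≤ h * μ.real {ω | 0 < |f ω| ∧ |f ω| < h} := by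
  have hS : NullMeasurableSet {ω | 0 < |f ω| ∧ |f ω| < h} μ :=
    (nullMeasurableSet_lt aemeasurable_const hf.abs).inter
      (nullMeasurableSet_lt hf.abs aemeasurable_const)
  calc ∫ ω, g ω ∂μ ≤ ∫ ω, {ω | 0 < |f ω| ∧ |f ω| < h}.indicator (fun _ => h) ω ∂μ :=
        integral_mono_of_nonneg (ae_of_all _ hg0) ((integrable_const h).indicator₀ hS)
          (ae_of_all _ fun ω => (hg ω).trans (abs_mul_ite_le_indicator f h ω))
    _ = h * μ.real {ω | 0 < |f ω| ∧ |f ω| < h} := by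
        rw [integral_indicator₀ hS, setIntegral_const, smul_eq_mul, mul_comm]

end Margin

theorem mul_le_mul_rpow_one_add {h m C α : ℝ} (hh : 0 < h) (hm : m ≤ C * h ^ α) :
    h * m ≤ C * h ^ (1 + α) := by
  calc h * m ≤ h * (C * h ^ α) := mul_le_mul_of_nonneg_left hm hh.le
    _ = C * h ^ (1 + α) := by rw [Real.rpow_add hh, Real.rpow_one]; ring

theorem stmt_17_general {Ω 𝒳 : Type*} [MeasurableSpace Ω] [MeasurableSpace 𝒳]
    (P : Measure Ω) [IsProbabilityMeasure P]
    (X : Ω → 𝒳)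
    (hX : Measurable X)
    (μ₁ μ₀ : 𝒳 → ℝ)
    (hμ₁L2 : MemLp (fun ω => μ₁ (X ω)) 2 P) (hμ₀L2 : MemLp (fun ω => μ₀ (X ω)) 2 P)
    (cbar α δ : ℝ)
    (hmargin : ∀ t : ℝ, 0 < t → t ≤ δ →
      (P {ω | 0 < |μ₁ (X ω) - μ₀ (X ω)| ∧ |μ₁ (X ω) - μ₀ (X ω)| < t}).toReal
        ≤ cbar * t ^ α)
    (V : (𝒳 → ℝ) → ℝ)
    (hV : ∀ D : 𝒳 → ℝ, V D = ∫ ω, (D (X ω) * μ₁ (X ω) + (1 - D (X ω)) * μ₀ (X ω)) ∂P)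
    (V₀ : ℝ) (hV₀ : V₀ = ∫ ω, max (μ₁ (X ω)) (μ₀ (X ω)) ∂P) :
    (∀ h : ℝ, 0 < h → h ≤ δ →
      ∫ ω, |μ₁ (X ω) - μ₀ (X ω)|
          * (if 0 < |μ₁ (X ω) - μ₀ (X ω)| ∧ |μ₁ (X ω) - μ₀ (X ω)| < h
              then (1 : ℝ) else 0) ∂P
        ≤ cbar * h ^ (1 + α)) ∧
    (∀ h : ℝ, 0 < h → h ≤ δ →
      ∀ D : 𝒳 → ℝ, Measurable D → (∀ x, D x ∈ Set.Icc (0 : ℝ) 1) →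
        (∀ x, h ≤ |μ₁ x - μ₀ x| → D x = if 0 < μ₁ x - μ₀ x then (1 : ℝ) else 0) →
        0 ≤ V₀ - V D ∧ V₀ - V D ≤ cbar * h ^ (1 + α)) := by
  have hτ : AEMeasurable (fun ω => μ₁ (X ω) - μ₀ (X ω)) P :=
    (hμ₁L2.aestronglyMeasurable.sub hμ₀L2.aestronglyMeasurable).aemeasurable
  have hI₁ := hμ₁L2.integrable one_le_two
  have hI₀ := hμ₀L2.integrable one_le_two
  have hintegral_le {h : ℝ} (hh : 0 < h) (hhδ : h ≤ δ) {g : Ω → ℝ} (hg0 : ∀ ω, 0 ≤ g ω)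
      (hg : ∀ ω, g ω ≤ |μ₁ (X ω) - μ₀ (X ω)|
        * if 0 < |μ₁ (X ω) - μ₀ (X ω)| ∧ |μ₁ (X ω) - μ₀ (X ω)| < h then 1 else 0) :
      ∫ ω, g ω ∂P ≤ cbar * h ^ (1 + α) :=
    (integral_le_mul_measureReal_of_le_abs_mul_ite hτ hg0 hg).trans
      (mul_le_mul_rpow_one_add hh (hmargin h hh hhδ))
  refine ⟨fun h hh hhδ => hintegral_le hh hhδ (fun ω => by positivity) (fun ω => le_rfl),
    fun h hh hhδ D hD hD01 hopt => ?_⟩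
  have hvalue_gap : V₀ - V D = ∫ ω, (max (μ₁ (X ω)) (μ₀ (X ω))
      - (D (X ω) * μ₁ (X ω) + (1 - D (X ω)) * μ₀ (X ω))) ∂P := by
    rw [hV₀, hV]
    exact (integral_sub (hI₁.sup hI₀)
      (hI₁.mul_add_one_sub_mul hI₀ (hD.comp hX).aestronglyMeasurable fun ω => hD01 (X ω))).symm
  rw [hvalue_gap]
  exact ⟨integral_nonneg fun ω => max_sub_mul_add_one_sub_mul_nonneg (hD01 (X ω)),
    hintegral_le hh hhδ (fun ω => max_sub_mul_add_one_sub_mul_nonneg (hD01 (X ω)))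
      fun ω => max_sub_mul_add_one_sub_mul_le_margin (hD01 (X ω)) (hopt (X ω))⟩

/-- Under the margin condition `P(0 < |τ(X)| < t) ≤ c̄·t^α` for all
`0 < t ≤ δ` (with `τ = μ₁ − μ₀`):
(i) for every `0 < h ≤ δ`, `E[|τ(X)|·1{0<|τ(X)|<h}] ≤ c̄·h^{1+α}`; and
(ii) for every `0 < h ≤ δ` and every measurable `D : 𝒳 → [0,1]` such that
`D(x) = 1{τ(x)>0}` whenever `|τ(x)| ≥ h`, the value gap satisfies
`0 ≤ V₀ − V(D) ≤ c̄·h^{1+α}`. -/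
theorem stmt_17 {Ω 𝒳 : Type*} [MeasurableSpace Ω] [MeasurableSpace 𝒳]
    (P : Measure Ω) [IsProbabilityMeasure P]
    (X : Ω → 𝒳) (A Y : Ω → ℝ)
    (hX : Measurable X) (hA : Measurable A) (hY : Measurable Y)
    (hAbin : ∀ ω, A ω = 0 ∨ A ω = 1) (hYL2 : MemLp Y 2 P)
    (c : ℝ) (hc : c ∈ Set.Ioo (0 : ℝ) (1 / 2))
    (π₁ : 𝒳 → ℝ) (hπ₁m : Measurable π₁) (hπ₁r : ∀ x, π₁ x ∈ Set.Icc c (1 - c))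
    (hcondA : P[A | MeasurableSpace.comap X inferInstance]
      =ᵐ[P] fun ω => π₁ (X ω))
    (μ₁ μ₀ : 𝒳 → ℝ) (hμ₁m : Measurable μ₁) (hμ₀m : Measurable μ₀)
    (hμ₁L2 : MemLp (fun ω => μ₁ (X ω)) 2 P) (hμ₀L2 : MemLp (fun ω => μ₀ (X ω)) 2 P)
    (hcond1 : P[fun ω => A ω * Y ω | MeasurableSpace.comap X inferInstance]
      =ᵐ[P] fun ω => μ₁ (X ω) * π₁ (X ω))
    (hcond0 : P[fun ω => (1 - A ω) * Y ω | MeasurableSpace.comap X inferInstance]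
      =ᵐ[P] fun ω => μ₀ (X ω) * (1 - π₁ (X ω)))
    (cbar α δ : ℝ) (hcbar : 0 < cbar) (hα : 0 < α) (hδ : 0 < δ)
    (hmargin : ∀ t : ℝ, 0 < t → t ≤ δ →
      (P {ω | 0 < |μ₁ (X ω) - μ₀ (X ω)| ∧ |μ₁ (X ω) - μ₀ (X ω)| < t}).toReal
        ≤ cbar * t ^ α)
    (V : (𝒳 → ℝ) → ℝ)
    (hV : ∀ D : 𝒳 → ℝ, V D = ∫ ω, (D (X ω) * μ₁ (X ω) + (1 - D (X ω)) * μ₀ (X ω)) ∂P)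
    (V₀ : ℝ) (hV₀ : V₀ = ∫ ω, max (μ₁ (X ω)) (μ₀ (X ω)) ∂P) :
    (∀ h : ℝ, 0 < h → h ≤ δ →
      ∫ ω, |μ₁ (X ω) - μ₀ (X ω)|
          * (if 0 < |μ₁ (X ω) - μ₀ (X ω)| ∧ |μ₁ (X ω) - μ₀ (X ω)| < h
              then (1 : ℝ) else 0) ∂P
        ≤ cbar * h ^ (1 + α)) ∧
    (∀ h : ℝ, 0 < h → h ≤ δ →
      ∀ D : 𝒳 → ℝ, Measurable D → (∀ x, D x ∈ Set.Icc (0 : ℝ) 1) →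
        (∀ x, h ≤ |μ₁ x - μ₀ x| → D x = if 0 < μ₁ x - μ₀ x then (1 : ℝ) else 0) →
        0 ≤ V₀ - V D ∧ V₀ - V D ≤ cbar * h ^ (1 + α)) :=
  stmt_17_general P X hX μ₁ μ₀ hμ₁L2 hμ₀L2 cbar α δ hmargin V hV V₀ hV₀
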